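/- Let n ≥ 2 and let z = [z₁,…,z_{n+1}] ∈ ∂ℍⁿ_ℂ with z not in the projective line Span({[e₁],[e_{n+1}]}). Let M_z be the (n−1)×(n−1) matrix with (i,j) entry z_{i+1} z̄_{j+1} for i ≠ j and z_{n+1} z̄₁ + |z_{i+1}|² for i = j. Then there exists an invertible (n−1)×(n−1) complex matrix M such that M M_z M^{−1} = |z₁ z_{n+1}| · diag(−e^{i𝔸([z],[e₁],[e_{n+1}])}, …, −e^{i𝔸([z],[e₁],[e_{n+1}])}, e^{i𝔸([e₁],[z],[e_{n+1}])}), i.e. M_z is diagonalizable with eigenvalue |z₁z_{n+1}|·(−e^{i𝔸([z],[e₁],[e_{n+1}])}) of multiplicity n−2 and eigenvalue |z₁z_{n+1}|·e^{i𝔸([e₁],[z],[e_{n+1}])} of multiplicity 1, where 𝔸 denotes the Cartan angular invariant. -/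

import Mathlib

noncomputable section

open scoped ComplexConjugate
open scoped Matrix

namespace CKG

/-- The underlying vector space `ℂ^{n+1}`. -/
abbrev Vc (n : ℕ) := Fin (n + 1) → ℂ

instance projTopInst (K V : Type*) [DivisionRing K] [AddCommGroup V] [Module K V]
    [TopologicalSpace V] : TopologicalSpace (Projectivization K V) :=
  inferInstanceAs (TopologicalSpace (Quotient (projectivizationSetoid K V)))

/-- The complex projective space `ℙⁿ_ℂ`. -/
abbrev Prj (n : ℕ) := Projectivization ℂ (Vc n)

/-- The Hermitian matrix `H` with ones at the corners `(1,n+1)`, `(n+1,1)` and the identity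
in the central `(n-1) × (n-1)` block. -/
def Hmat (n : ℕ) : Matrix (Fin (n + 1)) (Fin (n + 1)) ℂ := fun i j =>
  if (i = 0 ∧ j = Fin.last n) ∨ (i = Fin.last n ∧ j = 0) ∨
      (i = j ∧ i ≠ 0 ∧ i ≠ Fin.last n) then 1 else 0

/-- The Hermitian form of signature `(1,n)` induced by `H`. -/
def herm (n : ℕ) (v w : Vc n) : ℂ := ∑ i, ∑ j, v i * Hmat n i j * conj (w j)

/-- The projective hyperplane `p^⊥` of points orthogonal to `p`. -/
def orthHyp (n : ℕ) (p : Prj n) : Set (Prj n) := {q | herm n q.rep p.rep = 0}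

/-- The projective span of a set of points of `ℙⁿ_ℂ`, as a set of points. -/
def projSpan (n : ℕ) (S : Set (Prj n)) : Set (Prj n) :=
  {r | r.rep ∈ Submodule.span ℂ (Projectivization.rep '' S)}

/-- The standard basis vector `e₁`. -/
def e1v (n : ℕ) : Vc n := Pi.single 0 1

/-- The standard basis vector `e_{n+1}`. -/
def eN1v (n : ℕ) : Vc n := Pi.single (Fin.last n) 1

lemma e1v_ne_zero (n : ℕ) : e1v n ≠ 0 := by
  intro h; have := congrFun h 0; simp [e1v] at this

lemma eN1v_ne_zero (n : ℕ) : eN1v n ≠ 0 := by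
  intro h; have := congrFun h (Fin.last n); simp [eN1v] at this

/-- The point `[e₁] ∈ ℙⁿ_ℂ`. -/
def e1pt (n : ℕ) : Prj n := Projectivization.mk ℂ (e1v n) (e1v_ne_zero n)

/-- The point `[e_{n+1}] ∈ ℙⁿ_ℂ`. -/
def eN1pt (n : ℕ) : Prj n := Projectivization.mk ℂ (eN1v n) (eN1v_ne_zero n)

/-- The inclusion of indices `{1, …, n-1}` (numbering `e₂, …, e_n`) into `Fin (n+1)`. -/
def idx {n : ℕ} (i : Fin (n - 1)) : Fin (n + 1) := ⟨i.val + 1, by omega⟩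

/-- The `(n-1) × (n-1)` matrix `M_z` with `(i,j)` entry `z_{i+1} z̄_{j+1}` for `i ≠ j` and
`z_{n+1} z̄₁ + |z_{i+1}|²` for `i = j`. -/
def Mz (n : ℕ) (z : Vc n) : Matrix (Fin (n - 1)) (Fin (n - 1)) ℂ := fun i j =>
  (if i = j then z (Fin.last n) * conj (z 0) else 0) + z (idx i) * conj (z (idx j))

/-- The embedding `ℂ^{n-1} → ℂ^{n+1}` into the coordinates `2, …, n`
(realizing the identification of `ℙ^{n-2}_ℂ` with `Span({e₂,…,e_n})`). -/
def embedMid (n : ℕ) (u : Fin (n - 1) → ℂ) : Vc n :=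
  fun i => ∑ j : Fin (n - 1), if idx j = i then u j else 0

/-- The projection `ℂ^{n+1} → ℂ^{n-1}` onto the coordinates `2, …, n`. -/
def midOf (n : ℕ) (v : Vc n) : Fin (n - 1) → ℂ := fun j => v (idx j)

/-- The Cartan angular invariant `𝔸(x,y,w) = arg(−⟨x,y⟩⟨y,w⟩⟨w,x⟩)`. -/
def cartanArg (n : ℕ) (x y w : Vc n) : ℝ :=
  Complex.arg (-(herm n x y * herm n y w * herm n w x))

/-- The map `φ_z` of the paper, at the level of sets:
`φ_z(w) = Span((Span((Span({w,e_{n+1}}) ∩ z^⊥) ∪ {z}) ∩ e₁^⊥) ∪ {e₁}) ∩ e_{n+1}^⊥`. -/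
def phiSet (n : ℕ) (z w : Prj n) : Set (Prj n) :=
  projSpan n
    ((projSpan n ((projSpan n {w, eN1pt n} ∩ orthHyp n z) ∪ {z}) ∩ orthHyp n (e1pt n))
      ∪ {e1pt n}) ∩ orthHyp n (eN1pt n)

/-!
Write `a = z_{n+1} z̄₁` and `u = (z₂, …, z_n)`, so that `M_z = a • 1 + u u*`. The Hermitian
matrix `u u*` has rank at most one and trace `‖u‖²`, so its eigenvalues are `‖u‖²` once and `0`
otherwise, and `M_z` is conjugate to `diag(a, …, a, a + ‖u‖²)`. On the boundary,
`⟨z, z⟩ = ā + a + ‖u‖² = 0`, so the last eigenvalue is `-ā`. Finally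
`𝔸([z],[e₁],[e_{n+1}]) = arg(-a)` and `𝔸([e₁],[z],[e_{n+1}]) = arg(-ā)`, and `|a| = |z₁ z_{n+1}|`.
-/

end CKG

theorem IsConj.exists_units_mul_mul_inv_eq {M : Type*} [Monoid M] {a b : M} (h : IsConj a b) :
    ∃ c : Mˣ, ↑c * a * ↑c⁻¹ = b := by
  obtain ⟨c, hc⟩ := h
  exact ⟨c, (Units.mul_inv_eq_iff_eq_mul c).mpr hc⟩

theorem IsConj.add_left {R : Type*} [Semiring R] {a b z : R} (hz : ∀ c : R, Commute c z)
    (h : IsConj a b) : IsConj (z + a) (z + b) := by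
  obtain ⟨c, hc⟩ := h
  exact ⟨c, SemiconjBy.add_right (hz c) hc⟩

theorem Pi.exists_eq_single_sum_of_support_subsingleton {ι M : Type*} [Fintype ι]
    [DecidableEq ι] [Nonempty ι] [AddCommMonoid M] (f : ι → M)
    (hf : (Function.support f).Subsingleton) :
    ∃ i₀, f = Pi.single i₀ (∑ i, f i) := by
  by_cases h : ∃ i₀, f i₀ ≠ 0
  · obtain ⟨i₀, hi₀⟩ := h
    have hzero : ∀ i ≠ i₀, f i = 0 := fun i hi => by
      by_contra hfi
      exact hi (hf hfi hi₀)
    refine ⟨i₀, ?_⟩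
    rw [Finset.sum_eq_single i₀ (fun i _ hi => hzero i hi) (by simp)]
    ext i
    by_cases hi : i = i₀ <;> simp [hi, hzero]
  · push Not at h
    refine ⟨Classical.arbitrary ι, ?_⟩
    ext i
    simp [h]

namespace Matrix

variable {n 𝕜 : Type*} [Fintype n] [DecidableEq n]

theorem isConj_diagonal_comp_perm {R : Type*} [CommRing R] (d : n → R) (σ : Equiv.Perm n) :
    IsConj (diagonal d) (diagonal (d ∘ σ)) := by
  refine ⟨⟨σ.permMatrix R, σ⁻¹.permMatrix R, ?_, ?_⟩, ?_⟩
  · rw [← permMatrix_mul, inv_mul_cancel, permMatrix_one]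
  · rw [← permMatrix_mul, mul_inv_cancel, permMatrix_one]
  · ext i j
    by_cases h : σ i = j <;> simp [PEquiv.toMatrix_apply, h]

theorem isConj_diagonal_single {R : Type*} [CommRing R] (i j : n) (x : R) :
    IsConj (diagonal (Pi.single i x)) (diagonal (Pi.single j x)) := by
  convert isConj_diagonal_comp_perm (Pi.single i x) (Equiv.swap j i) using 2
  ext k
  by_cases hk : k = j <;> simp [Equiv.swap_apply_eq_iff, hk]

theorem IsHermitian.isConj_diagonal_eigenvalues [RCLike 𝕜] {A : Matrix n n 𝕜}
    (hA : A.IsHermitian) : IsConj A (diagonal (RCLike.ofReal ∘ hA.eigenvalues)) := by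
  have h := hA.conjStarAlgAut_star_eigenvectorUnitary
  rw [Unitary.conjStarAlgAut_star_apply] at h
  set U : Matrix n n 𝕜 := (hA.eigenvectorUnitary : Matrix n n 𝕜)
  have hU : U * star U = 1 := Unitary.mul_star_self_of_mem hA.eigenvectorUnitary.2
  refine ⟨Unitary.toUnits (star hA.eigenvectorUnitary), ?_⟩
  change star U * A = _ * star U
  rw [← h, mul_assoc _ U, hU, mul_one]

open scoped ComplexOrder in
theorem isConj_vecMulVec_star_self [RCLike 𝕜] (u : n → 𝕜) (j : n) :
    IsConj (vecMulVec u (star u)) (diagonal (Pi.single j (u ⬝ᵥ star u))) := by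
  have hA : (vecMulVec u (star u)).IsHermitian := (posSemidef_vecMulVec_self_star u).isHermitian
  have hsupp : (Function.support hA.eigenvalues).Subsingleton := by
    have hrank := hA.rank_eq_card_non_zero_eigs ▸ rank_vecMulVec_le u (star u)
    have : Subsingleton {i // hA.eigenvalues i ≠ 0} := Fintype.card_le_one_iff_subsingleton.mp hrank
    exact (Set.subsingleton_coe _).mp this
  have : Nonempty n := ⟨j⟩
  obtain ⟨i₀, hi₀⟩ := Pi.exists_eq_single_sum_of_support_subsingleton hA.eigenvalues hsupp
  have htrace : ((∑ i, hA.eigenvalues i : ℝ) : 𝕜) = u ⬝ᵥ star u := by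
    rw [← trace_vecMulVec, hA.trace_eq_sum_eigenvalues]
    push_cast
    rfl
  have hdiag : RCLike.ofReal ∘ hA.eigenvalues = Pi.single i₀ (u ⬝ᵥ star u) := by
    rw [hi₀, ← htrace]
    ext i
    by_cases hi : i = i₀ <;> simp [hi]
  exact hA.isConj_diagonal_eigenvalues.trans (hdiag ▸ isConj_diagonal_single i₀ j _)

end Matrix

namespace CKG

open Complex Matrix

theorem idx_ne_zero {n : ℕ} (j : Fin (n - 1)) : idx j ≠ 0 := by
  simp [idx, Fin.ext_iff]

theorem idx_ne_last {n : ℕ} (j : Fin (n - 1)) : idx j ≠ Fin.last n := by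
  simp only [ne_eq, Fin.ext_iff, idx, Fin.val_last]
  omega

theorem idx_injective {n : ℕ} : Function.Injective (idx : Fin (n - 1) → Fin (n + 1)) :=
  fun i j h => Fin.ext (by simpa [idx] using congrArg Fin.val h)

theorem sum_univ_eq_zero_add_sum_idx_add_last {M : Type*} [AddCommMonoid M] {n : ℕ} (hn : 1 ≤ n)
    (f : Fin (n + 1) → M) : ∑ i, f i = f 0 + ∑ j : Fin (n - 1), f (idx j) + f (Fin.last n) := by
  obtain ⟨k, rfl⟩ := Nat.exists_eq_add_of_le' hn
  rw [Fin.sum_univ_succ, Fin.sum_univ_castSucc, ← add_assoc]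
  rfl

theorem zero_ne_last {n : ℕ} (hn : 1 ≤ n) : (0 : Fin (n + 1)) ≠ Fin.last n :=
  have : NeZero n := ⟨by omega⟩
  Fin.last_pos'.ne

theorem herm_eq_add_dotProduct_midOf {n : ℕ} (hn : 1 ≤ n) (v w : Vc n) :
    herm n v w = v 0 * conj (w (Fin.last n)) + v (Fin.last n) * conj (w 0) +
      midOf n v ⬝ᵥ star (midOf n w) := by
  have h0 := zero_ne_last hn
  simp only [herm, sum_univ_eq_zero_add_sum_idx_add_last hn]
  simp [Hmat, h0, h0.symm, idx_ne_zero, idx_ne_last, idx_injective.eq_iff, dotProduct, midOf]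
  ring

theorem herm_e1v_left {n : ℕ} (hn : 1 ≤ n) (w : Vc n) :
    herm n (e1v n) w = conj (w (Fin.last n)) := by
  simp [herm_eq_add_dotProduct_midOf hn, e1v, midOf, idx_ne_zero, dotProduct,
    (zero_ne_last hn).symm]

theorem herm_e1v_right {n : ℕ} (hn : 1 ≤ n) (v : Vc n) : herm n v (e1v n) = v (Fin.last n) := by
  simp [herm_eq_add_dotProduct_midOf hn, e1v, midOf, idx_ne_zero, dotProduct,
    (zero_ne_last hn).symm]

theorem herm_eN1v_left {n : ℕ} (hn : 1 ≤ n) (w : Vc n) : herm n (eN1v n) w = conj (w 0) := by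
  simp [herm_eq_add_dotProduct_midOf hn, eN1v, midOf, idx_ne_last, dotProduct, zero_ne_last hn]

theorem herm_eN1v_right {n : ℕ} (hn : 1 ≤ n) (v : Vc n) : herm n v (eN1v n) = v 0 := by
  simp [herm_eq_add_dotProduct_midOf hn, eN1v, midOf, idx_ne_last, dotProduct, zero_ne_last hn]

theorem cartanArg_e1v_z_eN1v {n : ℕ} (hn : 1 ≤ n) (z : Vc n) :
    cartanArg n (e1v n) z (eN1v n) = arg (-(z 0 * conj (z (Fin.last n)))) := by
  rw [cartanArg, herm_e1v_left hn, herm_eN1v_right hn, herm_eN1v_left hn]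
  simp [e1v, mul_comm]

theorem cartanArg_z_e1v_eN1v {n : ℕ} (hn : 1 ≤ n) (z : Vc n) :
    cartanArg n z (e1v n) (eN1v n) = arg (-(z (Fin.last n) * conj (z 0))) := by
  rw [cartanArg, herm_e1v_right hn, herm_eN1v_right hn, herm_eN1v_left hn]
  simp [e1v]

theorem Mz_eq_smul_one_add_vecMulVec (n : ℕ) (z : Vc n) :
    Mz n z = (z (Fin.last n) * conj (z 0)) • 1 + vecMulVec (midOf n z) (star (midOf n z)) := by
  ext i j
  simp [Mz, vecMulVec, one_apply, midOf]

theorem Mz_diagonalizable_with_cartan_eigenvalues_general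
    (n : ℕ) (hn : 2 ≤ n) (zv : Vc n)
    (hbd : herm n zv zv = 0) :
    ∃ M : GL (Fin (n - 1)) ℂ,
      (M : Matrix (Fin (n - 1)) (Fin (n - 1)) ℂ) * Mz n zv *
          ((M⁻¹ : GL (Fin (n - 1)) ℂ) : Matrix (Fin (n - 1)) (Fin (n - 1)) ℂ) =
        Matrix.diagonal (fun i : Fin (n - 1) =>
          if (i : ℕ) = n - 2 then
            (‖zv 0 * zv (Fin.last n)‖ : ℂ) *
              Complex.exp (Complex.I * (cartanArg n (e1v n) zv (eN1v n)))
          else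
            (‖zv 0 * zv (Fin.last n)‖ : ℂ) *
              (-Complex.exp (Complex.I * (cartanArg n zv (e1v n) (eN1v n))))) := by
  set a := zv (Fin.last n) * conj (zv 0) with ha
  rw [herm_eq_add_dotProduct_midOf (by omega)] at hbd
  have polar (w : ℂ) (hw : ‖w‖ = ‖a‖) : (‖zv 0 * zv (Fin.last n)‖ : ℂ) * exp (I * arg w) = w := by
    rw [show ‖zv 0 * zv (Fin.last n)‖ = ‖w‖ by simp [hw, ha, mul_comm], mul_comm I,
      norm_mul_exp_arg_mul_I]
  obtain ⟨M, hM⟩ := ((isConj_vecMulVec_star_self (midOf n zv) ⟨n - 2, by omega⟩).add_left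
    fun c => (Commute.one_right c).smul_right a).exists_units_mul_mul_inv_eq
  refine ⟨M, ?_⟩
  rw [Mz_eq_smul_one_add_vecMulVec, hM, smul_one_eq_diagonal, diagonal_add,
    cartanArg_e1v_z_eN1v (by omega), cartanArg_z_e1v_eN1v (by omega)]
  congr 1
  funext i
  by_cases hi : (i : ℕ) = n - 2
  · rw [if_pos hi, polar _ (by simp [ha, mul_comm]), Pi.single_apply, if_pos (Fin.ext hi)]
    linear_combination hbd
  · rw [if_neg hi, mul_neg, polar _ (by simp [ha]), Pi.single_apply,
      if_neg (fun h => hi (congrArg Fin.val h))]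
    simp [ha]

/-- For `z ∈ ∂ℍⁿ_ℂ` not on the projective line through `[e₁]` and
`[e_{n+1}]`, the matrix `M_z` is diagonalizable, conjugate to
`|z₁z_{n+1}| · diag(−e^{i𝔸([z],[e₁],[e_{n+1}])}, …, −e^{i𝔸([z],[e₁],[e_{n+1}])},
e^{i𝔸([e₁],[z],[e_{n+1}])})`, with the last eigenvalue of multiplicity one. -/
theorem Mz_diagonalizable_with_cartan_eigenvalues
    (n : ℕ) (hn : 2 ≤ n) (zv : Vc n) (hzne : zv ≠ 0)
    (hbd : herm n zv zv = 0)
    (hmid : midOf n zv ≠ 0) :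
    ∃ M : GL (Fin (n - 1)) ℂ,
      (M : Matrix (Fin (n - 1)) (Fin (n - 1)) ℂ) * Mz n zv *
          ((M⁻¹ : GL (Fin (n - 1)) ℂ) : Matrix (Fin (n - 1)) (Fin (n - 1)) ℂ) =
        Matrix.diagonal (fun i : Fin (n - 1) =>
          if (i : ℕ) = n - 2 then
            (‖zv 0 * zv (Fin.last n)‖ : ℂ) *
              Complex.exp (Complex.I * (cartanArg n (e1v n) zv (eN1v n)))
          else
            (‖zv 0 * zv (Fin.last n)‖ : ℂ) *
              (-Complex.exp (Complex.I * (cartanArg n zv (e1v n) (eN1v n))))) :=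
  Mz_diagonalizable_with_cartan_eigenvalues_general n hn zv hbd

end CKG
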